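/- arXiv:1512.05675 — 2 statements merged into one kernel-verified Lean document; each statement's English description precedes it below -/
import Mathlib

section
/- For every even n ≥ 4 and every natural number m with 3n/2 ≤ m ≤ n(n−1)/2, there exists a finite simple 3-connected graph on n vertices with exactly m edges. -/
open SimpleGraph

/-- Möbius ladder: cycle plus diameters, as a circulant on `ZMod n`. -/
def mob (n : ℕ) [NeZero n] : SimpleGraph (ZMod n) where
  Adj v w := v ≠ w ∧ (w - v = 1 ∨ v - w = 1 ∨
    w - v = ((n / 2 : ℕ) : ZMod n) ∨ v - w = ((n / 2 : ℕ) : ZMod n))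
  symm := by
    constructor
    rintro v w ⟨h1, h2⟩
    exact ⟨h1.symm, by tauto⟩
  loopless := ⟨fun v h => h.1 rfl⟩

lemma cast_ne_cast {n l t : ℕ} [NeZero n] (hl : l < n) (ht : t < n) (h : l ≠ t) :
    (l : ZMod n) ≠ (t : ZMod n) := by
  intro he
  apply h
  have := congrArg ZMod.val he
  rwa [ZMod.val_cast_of_lt hl, ZMod.val_cast_of_lt ht] at this

lemma addcast_ne {n : ℕ} [NeZero n] (a : ZMod n) {p q : ℕ} (hp : p < n) (hq : q < n)
    (hne : p ≠ q) : a + (p : ZMod n) ≠ a + (q : ZMod n) := by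
  intro h
  exact cast_ne_cast hp hq hne (by linear_combination h)

lemma arc_reach {n : ℕ} [NeZero n] (h4 : 4 ≤ n) (A : Set (ZMod n)) (a : ZMod n)
    (p q : ℕ) (hpq : p ≤ q) (hqn : q < n)
    (hmem : ∀ l, p ≤ l → l ≤ q → a + (l : ZMod n) ∈ A) :
    ((mob n).induce A).Reachable ⟨a + (p : ZMod n), hmem p le_rfl hpq⟩
      ⟨a + (q : ZMod n), hmem q hpq le_rfl⟩ := by
  induction q, hpq using Nat.le_induction with
  | base => exact Reachable.refl _
  | succ q hq ih =>
    have hqn' : q < n := by omega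
    have ih' := ih hqn' (fun l hl hl' => hmem l hl (by omega))
    have hadj : ((mob n).induce A).Adj ⟨a + (q : ZMod n), hmem q hq (by omega)⟩
        ⟨a + ((q + 1 : ℕ) : ZMod n), hmem (q+1) (by omega) le_rfl⟩ := by
      have base : (mob n).Adj (a + (q : ZMod n)) (a + ((q + 1 : ℕ) : ZMod n)) := by
        refine ⟨addcast_ne a hqn' hqn (by omega), Or.inl ?_⟩
        push_cast
        ring
      exact base
    exact ih'.trans hadj.reachable

lemma mob_core {n : ℕ} [NeZero n] (hev : Even n) (h4 : 4 ≤ n) (a b : ZMod n) :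
    ((mob n).induce (({a, b} : Set (ZMod n))ᶜ)).Preconnected := by
  obtain ⟨c, hc⟩ := hev
  have hc2 : 2 ≤ c := by omega
  have hn2 : n / 2 = c := by omega
  have hval : ∀ x : ZMod n, ((x.val : ℕ) : ZMod n) = x := ZMod.natCast_rightInverse
  obtain ⟨t, htn, rfl⟩ : ∃ t : ℕ, t < n ∧ b = a + (t : ZMod n) :=
    ⟨(b - a).val, ZMod.val_lt _, by rw [hval]; ring⟩
  set A : Set (ZMod n) := ({a, a + (t : ZMod n)} : Set (ZMod n))ᶜ with hA
  have hmemA : ∀ l : ℕ, l ≠ 0 → l ≠ t → l < n → a + (l : ZMod n) ∈ A := by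
    intro l h0 ht hln
    simp only [hA, Set.mem_compl_iff, Set.mem_insert_iff, Set.mem_singleton_iff]
    push_neg
    refine ⟨?_, addcast_ne a hln htn ht⟩
    intro h
    exact cast_ne_cast hln (by omega : 0 < n) h0 (by push_cast; linear_combination h)
  -- walks within one arc
  have reach2 : ∀ p q : ℕ, ∀ (hp0 : p ≠ 0) (hpt : p ≠ t) (hq0 : q ≠ 0) (hqt : q ≠ t)
      (hpn : p < n) (hqn : q < n),
      ((p < t ∧ q < t) ∨ (t < p ∧ t < q)) →
      ((mob n).induce A).Reachable ⟨a + (p : ZMod n), hmemA p hp0 hpt hpn⟩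
        ⟨a + (q : ZMod n), hmemA q hq0 hqt hqn⟩ := by
    intro p q hp0 hpt hq0 hqt hpn hqn hside
    rcases le_total p q with hle | hle
    · exact arc_reach h4 A a p q hle hqn
        (fun l hl hl' => hmemA l (by omega) (by omega) (by omega))
    · exact (arc_reach h4 A a q p hle hpn
        (fun l hl hl' => hmemA l (by omega) (by omega) (by omega))).symm
  -- crossing between the two arcs via a diameter edge
  have cross : ∀ i j : ℕ, ∀ (hi0 : i ≠ 0) (hj0 : j ≠ 0) (hit : i < t) (htj : t < j)
      (hin : i < n) (hjn : j < n),
      ((mob n).induce A).Reachable ⟨a + (i : ZMod n), hmemA i hi0 (by omega) hin⟩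
        ⟨a + (j : ZMod n), hmemA j hj0 (by omega) hjn⟩ := by
    intro i j hi0 hj0 hit htj hin hjn
    have h2t : 2 ≤ t := by omega
    have htn2 : t + 2 ≤ n := by omega
    by_cases htc : t ≤ c
    · have r1 := reach2 i 1 hi0 (by omega) (by omega) (by omega) hin (by omega)
        (Or.inl ⟨hit, by omega⟩)
      have r2 := reach2 (1+c) j (by omega) (by omega) hj0 (by omega) (by omega) hjn
        (Or.inr ⟨by omega, htj⟩)
      have e : (mob n).Adj (a + ((1:ℕ) : ZMod n)) (a + ((1+c : ℕ) : ZMod n)) := by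
        refine ⟨addcast_ne a (by omega) (by omega) (by omega), Or.inr (Or.inr (Or.inl ?_))⟩
        rw [hn2]; push_cast; ring
      have e' : ((mob n).induce A).Adj
          ⟨a + ((1:ℕ) : ZMod n), hmemA 1 (by omega) (by omega) (by omega)⟩
          ⟨a + ((1+c : ℕ) : ZMod n), hmemA (1+c) (by omega) (by omega) (by omega)⟩ := e
      exact (r1.trans e'.reachable).trans r2
    · have hd0 : t + 1 - c ≠ 0 := by omega
      have r1 := reach2 i (t+1-c) hi0 (by omega) hd0 (by omega) hin (by omega)
        (Or.inl ⟨hit, by omega⟩)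
      have r2 := reach2 (t+1) j (by omega) (by omega) hj0 (by omega) (by omega) hjn
        (Or.inr ⟨by omega, htj⟩)
      have hcast : ((t+1-c : ℕ) : ZMod n) = ((t+1 : ℕ) : ZMod n) - (c : ZMod n) := by
        rw [Nat.cast_sub (by omega)]
      have e : (mob n).Adj (a + ((t+1-c : ℕ) : ZMod n)) (a + ((t+1 : ℕ) : ZMod n)) := by
        refine ⟨addcast_ne a (by omega) (by omega) (by omega), Or.inr (Or.inr (Or.inl ?_))⟩
        rw [hn2, hcast]; ring
      have e' : ((mob n).induce A).Adj
          ⟨a + ((t+1-c:ℕ) : ZMod n), hmemA _ hd0 (by omega) (by omega)⟩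
          ⟨a + ((t+1:ℕ) : ZMod n), hmemA _ (by omega) (by omega) (by omega)⟩ := e
      exact (r1.trans e'.reachable).trans r2
  rintro ⟨u, hu⟩ ⟨v, hv⟩
  obtain ⟨i, hin, rfl⟩ : ∃ i : ℕ, i < n ∧ u = a + (i : ZMod n) :=
    ⟨(u - a).val, ZMod.val_lt _, by rw [hval]; ring⟩
  obtain ⟨j, hjn, rfl⟩ : ∃ j : ℕ, j < n ∧ v = a + (j : ZMod n) :=
    ⟨(v - a).val, ZMod.val_lt _, by rw [hval]; ring⟩
  have hu' : ¬(a + (i : ZMod n) = a ∨ a + (i : ZMod n) = a + (t : ZMod n)) := by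
    simpa [hA, Set.mem_compl_iff, Set.mem_insert_iff] using hu
  have hv' : ¬(a + (j : ZMod n) = a ∨ a + (j : ZMod n) = a + (t : ZMod n)) := by
    simpa [hA, Set.mem_compl_iff, Set.mem_insert_iff] using hv
  push_neg at hu' hv'
  have hi0 : i ≠ 0 := by rintro rfl; exact hu'.1 (by push_cast; ring)
  have hj0 : j ≠ 0 := by rintro rfl; exact hv'.1 (by push_cast; ring)
  have hit : i ≠ t := by rintro rfl; exact hu'.2 rfl
  have hjt : j ≠ t := by rintro rfl; exact hv'.2 rfl
  rcases lt_trichotomy i t with h1 | h1 | h1 <;> rcases lt_trichotomy j t with h2 | h2 | h2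
  · exact reach2 i j hi0 hit hj0 hjt hin hjn (Or.inl ⟨h1, h2⟩)
  · exact absurd h2 hjt
  · exact cross i j hi0 hj0 h1 h2 hin hjn
  · exact absurd h1 hit
  · exact absurd h1 hit
  · exact absurd h1 hit
  · exact (cross j i hj0 hi0 h2 h1 hjn hin).symm
  · exact absurd h2 hjt
  · exact reach2 i j hi0 hit hj0 hjt hin hjn (Or.inr ⟨h1, h2⟩)

lemma reach_transfer {V : Type*} {G : SimpleGraph V} {A B : Set V} (h : A ⊆ B)
    {x y : ↥A} (hr : (G.induce A).Reachable x y) :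
    (G.induce B).Reachable ⟨x.1, h x.2⟩ ⟨y.1, h y.2⟩ :=
  hr.map ⟨Set.inclusion h, fun ha => ha⟩

lemma mob_conn {n : ℕ} [NeZero n] (hev : Even n) (h4 : 4 ≤ n) (s : Finset (ZMod n))
    (hs : s.card ≤ 2) : ((mob n).induce ((↑s : Set (ZMod n))ᶜ)).Connected := by
  have hcard : Fintype.card (ZMod n) = n := ZMod.card n
  obtain ⟨a, b, hab⟩ : ∃ a b : ZMod n, (↑s : Set (ZMod n)) ⊆ {a, b} := by
    obtain h0 | h1 | h2 : s.card = 0 ∨ s.card = 1 ∨ s.card = 2 := by omega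
    · exact ⟨0, 0, by simp [Finset.card_eq_zero.mp h0]⟩
    · obtain ⟨x, rfl⟩ := Finset.card_eq_one.mp h1
      exact ⟨x, x, by simp⟩
    · obtain ⟨x, y, -, rfl⟩ := Finset.card_eq_two.mp h2
      exact ⟨x, y, by simp⟩
  have hsub : (({a, b} : Set (ZMod n))ᶜ : Set (ZMod n)) ⊆ (↑s : Set (ZMod n))ᶜ :=
    Set.compl_subset_compl.mpr hab
  have one_ne : (1 : ZMod n) ≠ 0 := by
    have := cast_ne_cast (n := n) (by omega : 1 < n) (by omega : 0 < n) (by omega)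
    simpa using this
  have two_ne : (2 : ZMod n) ≠ 0 := by
    have := cast_ne_cast (n := n) (by omega : 2 < n) (by omega : 0 < n) (by omega)
    simpa using this
  rw [connected_iff]
  constructor
  · rintro ⟨u, hu⟩ ⟨v, hv⟩
    have patch : ∀ x (hx : x ∈ (↑s : Set (ZMod n))ᶜ),
        ∃ y, ∃ hy : y ∈ (↑s : Set (ZMod n))ᶜ, y ≠ a ∧ y ≠ b ∧
          ((mob n).induce ((↑s : Set (ZMod n))ᶜ)).Reachable ⟨x, hx⟩ ⟨y, hy⟩ := by
      intro x hx
      by_cases hxab : x ≠ a ∧ x ≠ b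
      · exact ⟨x, hx, hxab.1, hxab.2, Reachable.refl _⟩
      · have hx_ab : x = a ∨ x = b := by tauto
        have cand : ∀ z : ZMod n, (mob n).Adj x z → z ≠ a → z ≠ b →
            ∃ y, ∃ hy : y ∈ (↑s : Set (ZMod n))ᶜ, y ≠ a ∧ y ≠ b ∧
              ((mob n).induce ((↑s : Set (ZMod n))ᶜ)).Reachable ⟨x, hx⟩ ⟨y, hy⟩ := by
          intro z hadj hza hzb
          have hz : z ∈ (↑s : Set (ZMod n))ᶜ := by
            intro hzs
            rcases hab hzs with h | h
            · exact hza h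
            · exact hzb h
          have e : ((mob n).induce ((↑s : Set (ZMod n))ᶜ)).Adj ⟨x, hx⟩ ⟨z, hz⟩ := hadj
          exact ⟨z, hz, hza, hzb, e.reachable⟩
        by_cases h1 : x + 1 ≠ a ∧ x + 1 ≠ b
        · refine cand (x + 1) ?_ h1.1 h1.2
          refine ⟨fun h => one_ne (by linear_combination -h), Or.inl (by ring)⟩
        · have h1' : x + 1 = a ∨ x + 1 = b := by tauto
          have hne1 : x + 1 ≠ x := fun h => one_ne (by linear_combination h)
          have hm1a : x - 1 ≠ a := by
            intro h
            rcases hx_ab with rfl | rfl <;> rcases h1' with h2 | h2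
            · exact one_ne (by linear_combination -h)
            · exact one_ne (by linear_combination -h)
            · exact two_ne (by linear_combination h2 - h)
            · exact hne1 h2
          have hm1b : x - 1 ≠ b := by
            intro h
            rcases hx_ab with rfl | rfl <;> rcases h1' with h2 | h2
            · exact hne1 h2
            · exact two_ne (by linear_combination h2 - h)
            · exact one_ne (by linear_combination -h)
            · exact one_ne (by linear_combination -h)
          refine cand (x - 1) ?_ hm1a hm1b
          refine ⟨fun h => one_ne (by linear_combination h), Or.inr (Or.inl (by ring))⟩
    obtain ⟨u', hu'', hua, hub, ru⟩ := patch u hu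
    obtain ⟨v', hv'', hva, hvb, rv⟩ := patch v hv
    have hcu : u' ∈ (({a, b} : Set (ZMod n))ᶜ : Set (ZMod n)) := by simp [hua, hub]
    have hcv : v' ∈ (({a, b} : Set (ZMod n))ᶜ : Set (ZMod n)) := by simp [hva, hvb]
    have core := mob_core hev h4 a b ⟨u', hcu⟩ ⟨v', hcv⟩
    have tr := reach_transfer hsub core
    exact (ru.trans tr).trans rv.symm
  · have hex : ∃ x : ZMod n, x ∉ s := by
      by_contra hno
      push_neg at hno
      have : (Finset.univ : Finset (ZMod n)).card ≤ s.card :=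
        Finset.card_le_card (fun x _ => hno x)
      rw [Finset.card_univ, hcard] at this
      omega
    obtain ⟨x, hx⟩ := hex
    exact ⟨⟨x, by simpa using hx⟩⟩

lemma mob_adj' {n : ℕ} [NeZero n] {v w : ZMod n} : (mob n).Adj v w ↔ v ≠ w ∧
    (w - v = 1 ∨ v - w = 1 ∨ w - v = ((n / 2 : ℕ) : ZMod n) ∨
      v - w = ((n / 2 : ℕ) : ZMod n)) := Iff.rfl

open scoped Classical in
lemma mob_card_edges {n : ℕ} [NeZero n] (hev : Even n) (h4 : 4 ≤ n) :
    2 * (mob n).edgeFinset.card = 3 * n := by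
  obtain ⟨c, hc⟩ := hev
  have hc2 : 2 ≤ c := by omega
  have hn2 : n / 2 = c := by omega
  have hcc : ((n / 2 : ℕ) : ZMod n) + ((n / 2 : ℕ) : ZMod n) = 0 := by
    rw [hn2, ← Nat.cast_add, ← hc, ZMod.natCast_self]
  have one_ne : (1 : ZMod n) ≠ 0 := by
    have := cast_ne_cast (n := n) (by omega : 1 < n) (by omega : 0 < n) (by omega)
    simpa using this
  have two_ne : (2 : ZMod n) ≠ 0 := by
    have := cast_ne_cast (n := n) (by omega : 2 < n) (by omega : 0 < n) (by omega)
    simpa using this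
  have cc_ne : ((n / 2 : ℕ) : ZMod n) ≠ 0 := by
    have := cast_ne_cast (n := n) (by omega : n / 2 < n) (by omega : 0 < n) (by omega)
    simpa using this
  have cc_ne_one : ((n / 2 : ℕ) : ZMod n) ≠ 1 := by
    have := cast_ne_cast (n := n) (by omega : n / 2 < n) (by omega : 1 < n) (by omega)
    simpa using this
  have cc_ne_neg : ((n / 2 : ℕ) : ZMod n) + 1 ≠ 0 := by
    have := cast_ne_cast (n := n) (by omega : n / 2 + 1 < n) (by omega : 0 < n) (by omega)
    push_cast at this
    simpa using this
  have hnbr : ∀ v : ZMod n, (mob n).neighborFinset v =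
      {v + 1, v - 1, v + ((n / 2 : ℕ) : ZMod n)} := by
    intro v
    ext w
    rw [SimpleGraph.mem_neighborFinset, mob_adj']
    simp only [Finset.mem_insert, Finset.mem_singleton]
    constructor
    · rintro ⟨hne, h | h | h | h⟩
      · exact Or.inl (by linear_combination h)
      · exact Or.inr (Or.inl (by linear_combination -h))
      · exact Or.inr (Or.inr (by linear_combination h))
      · exact Or.inr (Or.inr (by linear_combination -hcc - h))
    · rintro (rfl | rfl | rfl)
      · exact ⟨fun h => one_ne (by linear_combination -h), Or.inl (by ring)⟩
      · exact ⟨fun h => one_ne (by linear_combination h), Or.inr (Or.inl (by ring))⟩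
      · exact ⟨fun h => cc_ne (by linear_combination -h),
          Or.inr (Or.inr (Or.inl (by ring)))⟩
  have hdeg : ∀ v : ZMod n, (mob n).degree v = 3 := by
    intro v
    rw [← SimpleGraph.card_neighborFinset_eq_degree, hnbr v]
    rw [Finset.card_insert_of_notMem, Finset.card_insert_of_notMem,
      Finset.card_singleton]
    · simp only [Finset.mem_singleton]
      intro h
      exact cc_ne_neg (by linear_combination -h)
    · simp only [Finset.mem_insert, Finset.mem_singleton]
      push_neg
      constructor
      · intro h
        exact two_ne (by linear_combination h)
      · intro h
        exact cc_ne_one (by linear_combination -h)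
  have hsum := (mob n).sum_degrees_eq_twice_card_edges
  rw [Finset.sum_congr rfl (fun v _ => hdeg v), Finset.sum_const,
    Finset.card_univ, ZMod.card, smul_eq_mul] at hsum
  omega

/-- A finite simple graph is 3-connected if it has at least 4 vertices and
deleting any set of at most 2 vertices leaves it connected. -/
def ThreeConnected {V : Type*} [Fintype V] (G : SimpleGraph V) : Prop :=
  4 ≤ Fintype.card V ∧
    ∀ s : Finset V, s.card ≤ 2 → (G.induce ((↑s : Set V)ᶜ)).Connected

theorem stmt6 (n m : ℕ) (hn : Even n) (h4 : 4 ≤ n)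
    (hlo : 3 * n ≤ 2 * m) (hhi : 2 * m ≤ n * (n - 1)) :
    ∃ G : SimpleGraph (Fin n), ThreeConnected G ∧ G.edgeSet.ncard = m := by
  classical
  obtain ⟨k, rfl⟩ : ∃ k, n = k + 1 := ⟨n - 1, by omega⟩
  haveI : NeZero (k + 1) := ⟨k.succ_ne_zero⟩
  show ∃ G : SimpleGraph (ZMod (k + 1)), ThreeConnected G ∧ G.edgeSet.ncard = m
  have hE : 2 * (mob (k + 1)).edgeFinset.card = 3 * (k + 1) := mob_card_edges hn h4
  have htopcard : ((⊤ : SimpleGraph (ZMod (k + 1))).edgeFinset).card = (k + 1).choose 2 := by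
    rw [SimpleGraph.card_edgeFinset_top_eq_card_choose_two, ZMod.card]
  have hdvd : 2 ∣ (k + 1) * k := by
    rw [mul_comm]
    exact (Nat.even_mul_succ_self k).two_dvd
  have hchoose : (k + 1).choose 2 * 2 = (k + 1) * k := by
    rw [Nat.choose_two_right]
    simp only [Nat.add_sub_cancel]
    omega
  have hhi' : 2 * m ≤ (k + 1) * k := by simpa using hhi
  obtain ⟨u, hsu, hut, hcardu⟩ := Finset.exists_subsuperset_card_eq
    (SimpleGraph.edgeFinset_mono (le_top : mob (k + 1) ≤ ⊤))
    (show (mob (k + 1)).edgeFinset.card ≤ m by omega)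
    (show m ≤ ((⊤ : SimpleGraph (ZMod (k + 1))).edgeFinset).card by
      rw [htopcard]; omega)
  refine ⟨SimpleGraph.fromEdgeSet ↑u, ⟨?_, ?_⟩, ?_⟩
  · show 4 ≤ Fintype.card (ZMod (k + 1))
    rw [ZMod.card]
    exact h4
  · intro s hs
    have hle : mob (k + 1) ≤ SimpleGraph.fromEdgeSet ↑u := by
      intro x y hxy
      rw [SimpleGraph.fromEdgeSet_adj]
      exact ⟨hsu (by rwa [SimpleGraph.mem_edgeFinset, SimpleGraph.mem_edgeSet]), hxy.ne⟩
    exact (mob_conn hn h4 s hs).mono (fun x y hxy => hle hxy)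
  · have hnd : ∀ e ∈ u, ¬ e.IsDiag := by
      intro e he
      have h := hut he
      rw [SimpleGraph.mem_edgeFinset, SimpleGraph.edgeSet_top] at h
      exact h
    have heq : (SimpleGraph.fromEdgeSet (↑u : Set (Sym2 (ZMod (k + 1))))).edgeSet = ↑u := by
      rw [SimpleGraph.edgeSet_fromEdgeSet]
      ext e
      simp only [Set.mem_diff, Set.mem_setOf_eq, Finset.mem_coe]
      exact ⟨fun h => h.1, fun h => ⟨h, hnd e h⟩⟩
    rw [heq, Set.ncard_coe_finset, hcardu]
end

section
/- For every odd n ≥ 5 and every natural number m with (3n+1)/2 ≤ m ≤ n(n−1)/2, there exists a finite simple 3-connected graph on n vertices with exactly m edges. -/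
open SimpleGraph Finset
open Fin.CommRing

section Base
variable (n k : ℕ) [NeZero n]

/-- base relation: cycle edges and chords i -- i+k for i ≤ k -/
def baseRel (x y : Fin n) : Prop :=
  y = x + 1 ∨ ∃ i : ℕ, i ≤ k ∧ x = (i : Fin n) ∧ y = ((i + k : ℕ) : Fin n)

def baseGraph : SimpleGraph (Fin n) := SimpleGraph.fromRel (baseRel n k)

end Base

section Arith
variable {n : ℕ} [NeZero n]

lemma sub_val_cases (a b : Fin n) :
    (b.val ≤ a.val ∧ (a - b).val = a.val - b.val) ∨
      (a.val < b.val ∧ (a - b).val = a.val + n - b.val) := by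
  have ha := a.isLt; have hb := b.isLt
  rw [Fin.sub_def]
  rcases le_or_gt b.val a.val with h | h
  · left
    refine ⟨h, ?_⟩
    simp only
    rw [show n - b.val + a.val = (a.val - b.val) + n by omega, Nat.add_mod_right,
      Nat.mod_eq_of_lt (by omega)]
  · right
    refine ⟨h, ?_⟩
    simp only
    rw [Nat.mod_eq_of_lt (by omega)]
    omega

lemma sub_val_add {a b : Fin n} (h : a ≠ b) : (a - b).val + (b - a).val = n := by
  have := sub_val_cases a b
  have := sub_val_cases b a
  have : a.val ≠ b.val := fun hv => h (Fin.ext hv)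
  have := a.isLt; have := b.isLt
  omega

lemma cast_val_lt {m : ℕ} (h : m < n) : ((m : Fin n)).val = m := Fin.val_cast_of_lt h

/-- splitting a point off an arc -/
lemma arc_ne {c d z : Fin n} (h1 : 0 < (z - c).val) (h2 : (z - c).val < (d - c).val) :
    z ≠ c ∧ z ≠ d := by
  constructor
  · intro h; subst h; simp at h1
  · intro h; subst h; omega
end Arith

section Chord
/-- the nat-level chord-selection lemma -/
lemma chordNat {k a b : ℕ} (hk : 2 ≤ k) (hab : a < b) (hb : b ≤ 2 * k)
    (h2 : 2 ≤ b - a) (h2' : b - a ≤ 2 * k - 1) :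
    ∃ i, i ≤ k ∧ i ≠ a ∧ i ≠ b ∧ i + k ≠ a ∧ i + k ≠ b ∧
      ((i < a ∧ a < i + k ∧ (b < i ∨ i + k < b)) ∨
        (i < b ∧ b < i + k ∧ (a < i ∨ i + k < a))) := by
  by_cases h : a < k ∧ b < 2 * k
  · exact ⟨max (a + 1) (b + 1 - k), by omega, by omega, by omega, by omega, by omega,
      Or.inr (by omega)⟩
  · exact ⟨a + 1 - k, by omega, by omega, by omega, by omega, by omega, Or.inl (by omega)⟩
end Chord

set_option linter.unusedSectionVars false

section Graph
variable {n k : ℕ} [NeZero n] (hn : n = 2 * k + 1) (hk : 2 ≤ k)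
include hn hk

lemma fin_two_ne_zero : (2 : Fin n) ≠ 0 := by
  intro h
  have : ((2 : ℕ) : Fin n) = 0 := by push_cast; exact h
  have := congrArg Fin.val this
  rw [cast_val_lt (by omega)] at this
  simp at this

lemma adj_cycle (x : Fin n) : (baseGraph n k).Adj x (x + 1) := by
  rw [baseGraph, fromRel_adj]
  refine ⟨?_, Or.inl (Or.inl rfl)⟩
  intro h
  nth_rewrite 1 [← add_zero x] at h
  have h1 : (0 : Fin n) = 1 := add_left_cancel h
  have := congrArg Fin.val h1
  rw [show (1 : Fin n) = ((1:ℕ) : Fin n) by push_cast; rfl, cast_val_lt (by omega)] at this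
  simp at this

lemma adj_chord {i : ℕ} (hi : i ≤ k) :
    (baseGraph n k).Adj ((i : Fin n)) (((i + k : ℕ) : Fin n)) := by
  rw [baseGraph, fromRel_adj]
  refine ⟨?_, Or.inl (Or.inr ⟨i, hi, rfl, rfl⟩)⟩
  intro h
  have := congrArg Fin.val h
  rw [cast_val_lt (by omega), cast_val_lt (by omega)] at this
  omega

lemma arcWalk (s : Finset (Fin n)) (x : Fin n) (t : ℕ)
    (h : ∀ j ≤ t, x + ((j : ℕ) : Fin n) ∉ s)
    (hx : x ∈ ((↑s : Set (Fin n)))ᶜ) (hxt : x + ((t : ℕ) : Fin n) ∈ ((↑s : Set (Fin n)))ᶜ) :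
    ((baseGraph n k).induce ((↑s : Set (Fin n))ᶜ)).Reachable ⟨x, hx⟩ ⟨x + ((t : ℕ) : Fin n), hxt⟩ := by
  induction t with
  | zero =>
    have e : (⟨x + ((0 : ℕ) : Fin n), hxt⟩ : ((↑s : Set (Fin n))ᶜ : Set (Fin n))) = ⟨x, hx⟩ :=
      Subtype.ext (by push_cast; ring)
    rw [e]
  | succ t ih =>
    have hxt' : x + ((t : ℕ) : Fin n) ∈ ((↑s : Set (Fin n)))ᶜ := by
      simpa using h t (by omega)
    refine (ih (fun j hj => h j (by omega)) hxt').trans (Adj.reachable ?_)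
    show (baseGraph n k).Adj (x + ((t : ℕ) : Fin n)) (x + (((t+1) : ℕ) : Fin n))
    have e : x + (((t+1) : ℕ) : Fin n) = (x + ((t : ℕ) : Fin n)) + 1 := by push_cast; ring
    rw [e]
    exact adj_cycle hn hk _

end Graph

section Graph2
variable {n k : ℕ} [NeZero n] (hn : n = 2 * k + 1) (hk : 2 ≤ k)
include hn hk

lemma arcWalk' (s : Finset (Fin n)) (x : Fin n) (t : ℕ)
    (h : ∀ j ≤ t, x + ((j : ℕ) : Fin n) ∉ s)
    (hx : x ∈ ((↑s : Set (Fin n)))ᶜ) (w : Fin n) (he : w = x + ((t : ℕ) : Fin n))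
    (hw : w ∈ ((↑s : Set (Fin n)))ᶜ) :
    ((baseGraph n k).induce ((↑s : Set (Fin n))ᶜ)).Reachable ⟨x, hx⟩ ⟨w, hw⟩ := by
  subst he
  exact arcWalk hn hk s x t h hx hw

lemma arc_notmem (s : Finset (Fin n)) (c d : Fin n)
    (hs : ∀ z ∈ s, z = c ∨ z = d) (m : ℕ) (h1 : 0 < m) (h2 : m < (d - c).val) :
    c + ((m : ℕ) : Fin n) ∉ s := by
  intro hmem
  have hmn : m < n := lt_of_lt_of_le h2 (le_of_lt (d - c).isLt)
  rcases hs _ hmem with h | h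
  · nth_rewrite 2 [← add_zero c] at h
    have h' := add_left_cancel h
    have := congrArg Fin.val h'
    rw [cast_val_lt hmn] at this
    simp at this
    omega
  · have h' : ((m : ℕ) : Fin n) = d - c := by rw [eq_sub_iff_add_eq, add_comm]; exact h
    have := congrArg Fin.val h'
    rw [cast_val_lt hmn] at this
    omega

lemma sameSideAux (s : Finset (Fin n)) (c d : Fin n)
    (hs : ∀ z ∈ s, z = c ∨ z = d) (u w : Fin n)
    (hu1 : 0 < (u - c).val) (hu2 : (u - c).val < (d - c).val)
    (hw2 : (w - c).val < (d - c).val)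
    (hle : (u - c).val ≤ (w - c).val)
    (hu : u ∈ (↑s : Set (Fin n))ᶜ) (hw : w ∈ (↑s : Set (Fin n))ᶜ) :
    ((baseGraph n k).induce ((↑s : Set (Fin n))ᶜ)).Reachable ⟨u, hu⟩ ⟨w, hw⟩ := by
  have hcu : c + (((u - c).val : ℕ) : Fin n) = u := by
    rw [Fin.cast_val_eq_self, add_comm, sub_add_cancel]
  have hcw : c + (((w - c).val : ℕ) : Fin n) = w := by
    rw [Fin.cast_val_eq_self, add_comm, sub_add_cancel]
  refine arcWalk' hn hk s u ((w - c).val - (u - c).val) ?_ hu w ?_ hw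
  · intro j hj
    have e2 : u + ((j : ℕ) : Fin n) = c + ((((u - c).val + j : ℕ)) : Fin n) := by
      rw [Nat.cast_add, ← add_assoc, hcu]
    rw [e2]
    exact arc_notmem hn hk s c d hs _ (by omega) (by omega)
  · rw [Nat.cast_sub hle, Fin.cast_val_eq_self, Fin.cast_val_eq_self]
    ring

lemma sameSide (s : Finset (Fin n)) (c d : Fin n)
    (hs : ∀ z ∈ s, z = c ∨ z = d) (u w : Fin n)
    (hu1 : 0 < (u - c).val) (hu2 : (u - c).val < (d - c).val)
    (hw1 : 0 < (w - c).val) (hw2 : (w - c).val < (d - c).val)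
    (hu : u ∈ (↑s : Set (Fin n))ᶜ) (hw : w ∈ (↑s : Set (Fin n))ᶜ) :
    ((baseGraph n k).induce ((↑s : Set (Fin n))ᶜ)).Reachable ⟨u, hu⟩ ⟨w, hw⟩ := by
  rcases le_total ((u - c).val) ((w - c).val) with h | h
  · exact sameSideAux hn hk s c d hs u w hu1 hu2 hw2 h hu hw
  · exact (sameSideAux hn hk s c d hs w u hw1 hw2 hu2 h hw hu).symm

end Graph2



section Graph3
variable {n k : ℕ} [NeZero n] (hn : n = 2 * k + 1) (hk : 2 ≤ k)

lemma sub_val_flip {c d z : Fin n} (h : (d - c).val < (z - c).val) :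
    (z - d).val = (z - c).val - (d - c).val := by
  have h1 := sub_val_cases z c
  have h2 := sub_val_cases z d
  have h3 := sub_val_cases d c
  have := z.isLt; have := c.isLt; have := d.isLt
  omega

include hn hk

lemma chordFin (c d : Fin n) (hL2 : 2 ≤ (d - c).val) (hL2' : (d - c).val ≤ n - 2) :
    ∃ x y : Fin n, (baseGraph n k).Adj x y ∧ x ≠ c ∧ x ≠ d ∧ y ≠ c ∧ y ≠ d ∧
      ((0 < (x - c).val ∧ (x - c).val < (d - c).val ∧ (d - c).val < (y - c).val) ∨
        (0 < (y - c).val ∧ (y - c).val < (d - c).val ∧ (d - c).val < (x - c).val)) := by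
  have hcn := c.isLt; have hdn := d.isLt
  have hsvdc := sub_val_cases d c
  rcases Nat.le_total c.val d.val with hor | hor
  · obtain ⟨i, hik, hia, hib, hika, hikb, hpos⟩ :=
      chordNat (k := k) (a := c.val) (b := d.val) hk (by omega) (by omega) (by omega) (by omega)
    refine ⟨((i : ℕ) : Fin n), (((i + k : ℕ)) : Fin n), adj_chord hn hk hik, ?_, ?_, ?_, ?_, ?_⟩
    · intro h; have := congrArg Fin.val h; rw [cast_val_lt (by omega)] at this; omega
    · intro h; have := congrArg Fin.val h; rw [cast_val_lt (by omega)] at this; omega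
    · intro h; have := congrArg Fin.val h; rw [cast_val_lt (by omega)] at this; omega
    · intro h; have := congrArg Fin.val h; rw [cast_val_lt (by omega)] at this; omega
    · have hsx := sub_val_cases (((i : ℕ) : Fin n)) c
      have hsy := sub_val_cases ((((i + k : ℕ)) : Fin n)) c
      rw [cast_val_lt (by omega)] at hsx
      rw [cast_val_lt (by omega)] at hsy
      omega
  · obtain ⟨i, hik, hia, hib, hika, hikb, hpos⟩ :=
      chordNat (k := k) (a := d.val) (b := c.val) hk (by omega) (by omega) (by omega) (by omega)
    refine ⟨((i : ℕ) : Fin n), (((i + k : ℕ)) : Fin n), adj_chord hn hk hik, ?_, ?_, ?_, ?_, ?_⟩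
    · intro h; have := congrArg Fin.val h; rw [cast_val_lt (by omega)] at this; omega
    · intro h; have := congrArg Fin.val h; rw [cast_val_lt (by omega)] at this; omega
    · intro h; have := congrArg Fin.val h; rw [cast_val_lt (by omega)] at this; omega
    · intro h; have := congrArg Fin.val h; rw [cast_val_lt (by omega)] at this; omega
    · have hsx := sub_val_cases (((i : ℕ) : Fin n)) c
      have hsy := sub_val_cases ((((i + k : ℕ)) : Fin n)) c
      rw [cast_val_lt (by omega)] at hsx
      rw [cast_val_lt (by omega)] at hsy
      omega

lemma crossCase (s : Finset (Fin n)) (c d u v : Fin n) (hcd : c ≠ d)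
    (hs : ∀ z ∈ s, z = c ∨ z = d)
    (hp1 : 0 < (u - c).val) (hp2 : (u - c).val < (d - c).val)
    (hq1 : (d - c).val < (v - c).val)
    (hu : u ∈ (↑s : Set (Fin n))ᶜ) (hv : v ∈ (↑s : Set (Fin n))ᶜ) :
    ((baseGraph n k).induce ((↑s : Set (Fin n))ᶜ)).Reachable ⟨u, hu⟩ ⟨v, hv⟩ := by
  have hqlt : (v - c).val < n := (v - c).isLt
  have hLlt : (d - c).val < n := (d - c).isLt
  obtain ⟨x, y, hadj0, hxc, hxd, hyc, hyd, hkey⟩ :=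
    chordFin hn hk c d (by omega) (by omega)
  have hxs : x ∈ (↑s : Set (Fin n))ᶜ := by
    simp only [Set.mem_compl_iff, Finset.mem_coe]
    intro hmem; rcases hs x hmem with h | h; exact hxc h; exact hxd h
  have hys : y ∈ (↑s : Set (Fin n))ᶜ := by
    simp only [Set.mem_compl_iff, Finset.mem_coe]
    intro hmem; rcases hs y hmem with h | h; exact hyc h; exact hyd h
  have hflip : ∀ z ∈ s, z = d ∨ z = c := fun z hz => (hs z hz).symm
  have hcdf := sub_val_add hcd
  have hadj : ((baseGraph n k).induce ((↑s : Set (Fin n))ᶜ)).Adj ⟨x, hxs⟩ ⟨y, hys⟩ := hadj0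
  have hylt : (y - c).val < n := (y - c).isLt
  have hxlt : (x - c).val < n := (x - c).isLt
  rcases hkey with ⟨k1, k2, k3⟩ | ⟨k1, k2, k3⟩
  · have r1 := sameSide hn hk s c d hs u x hp1 hp2 k1 k2 hu hxs
    have r2 := sameSide hn hk s d c hflip y v
      (by rw [sub_val_flip k3]; omega) (by rw [sub_val_flip k3]; omega)
      (by rw [sub_val_flip hq1]; omega) (by rw [sub_val_flip hq1]; omega)
      hys hv
    exact r1.trans (hadj.reachable.trans r2)
  · have r1 := sameSide hn hk s c d hs u y hp1 hp2 k1 k2 hu hys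
    have r2 := sameSide hn hk s d c hflip x v
      (by rw [sub_val_flip k3]; omega) (by rw [sub_val_flip k3]; omega)
      (by rw [sub_val_flip hq1]; omega) (by rw [sub_val_flip hq1]; omega)
      hxs hv
    exact r1.trans (hadj.symm.reachable.trans r2)
end Graph3


section Arith2
variable {n : ℕ} [NeZero n]

lemma sub_val_ne_zero {a b : Fin n} (h : a ≠ b) : (a - b).val ≠ 0 := by
  intro h0
  apply h
  have h1 : a - b = 0 := Fin.ext (by simpa using h0)
  exact sub_eq_zero.mp h1

lemma sub_val_ne {a b c : Fin n} (h : a ≠ b) : (a - c).val ≠ (b - c).val := by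
  intro he
  exact h (sub_left_inj.mp (Fin.ext he))
end Arith2

section Graph4
variable {n k : ℕ} [NeZero n] (hn : n = 2 * k + 1) (hk : 2 ≤ k)
include hn hk

lemma hardCase (s : Finset (Fin n)) (c d u v : Fin n) (hcd : c ≠ d)
    (hs : ∀ z ∈ s, z = c ∨ z = d)
    (huc : u ≠ c) (hud : u ≠ d) (hvc : v ≠ c) (hvd : v ≠ d)
    (hu : u ∈ (↑s : Set (Fin n))ᶜ) (hv : v ∈ (↑s : Set (Fin n))ᶜ) :
    ((baseGraph n k).induce ((↑s : Set (Fin n))ᶜ)).Reachable ⟨u, hu⟩ ⟨v, hv⟩ := by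
  have hcdf := sub_val_add hcd
  have hp0 := sub_val_ne_zero huc
  have hpL := sub_val_ne hud (c := c)
  have hq0 := sub_val_ne_zero hvc
  have hqL := sub_val_ne hvd (c := c)
  have hL0 := sub_val_ne_zero (Ne.symm hcd) (b := c)
  have hplt := (u - c).isLt
  have hqlt := (v - c).isLt
  have hflip : ∀ z ∈ s, z = d ∨ z = c := fun z hz => (hs z hz).symm
  rcases lt_or_gt_of_ne hpL with hp | hp <;> rcases lt_or_gt_of_ne hqL with hq | hq
  · -- both in arc (c,d)
    exact sameSide hn hk s c d hs u v (by omega) hp (by omega) hq hu hv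
  · -- u in (c,d), v in (d,c): chord
    exact crossCase hn hk s c d u v hcd hs (by omega) hp hq hu hv
  · -- v in (c,d), u in (d,c)
    exact (crossCase hn hk s c d v u hcd hs (by omega) hq hp hv hu).symm
  · -- both in arc (d,c)
    have e1 := sub_val_flip hp
    have e2 := sub_val_flip hq
    exact sameSide hn hk s d c hflip u v (by omega) (by omega) (by omega) (by omega) hu hv

lemma base_conn (s : Finset (Fin n)) (hcard : s.card ≤ 2) :
    ((baseGraph n k).induce ((↑s : Set (Fin n))ᶜ)).Connected := by
  rw [SimpleGraph.connected_iff]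
  constructor
  · -- preconnected
    rintro ⟨u, hu⟩ ⟨v, hv⟩
    have hu' : u ∉ s := hu
    have hv' : v ∉ s := hv
    by_cases hf : ∀ j ≤ (v - u).val, u + ((j : ℕ) : Fin n) ∉ s
    · refine arcWalk' hn hk s u ((v - u).val) hf hu v ?_ hv
      rw [Fin.cast_val_eq_self, add_comm, sub_add_cancel]
    · by_cases hb : ∀ j ≤ (u - v).val, v + ((j : ℕ) : Fin n) ∉ s
      · refine (arcWalk' hn hk s v ((u - v).val) hb hv u ?_ hu).symm
        rw [Fin.cast_val_eq_self, add_comm, sub_add_cancel]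
      · push_neg at hf hb
        obtain ⟨j₁, hj₁, hc₁⟩ := hf
        obtain ⟨j₂, hj₂, hc₂⟩ := hb
        have huv : u ≠ v := by
          intro h
          subst h
          have h0 : (u - u).val = 0 := by rw [sub_self]; simp
          have hj0 : j₁ = 0 := by omega
          subst hj0
          apply hu'; simpa using hc₁
        have hj10 : j₁ ≠ 0 := by
          intro h; subst h; apply hu'; simpa using hc₁
        have hj20 : j₂ ≠ 0 := by
          intro h; subst h; apply hv'; simpa using hc₂
        set c := u + ((j₁ : ℕ) : Fin n) with hcdef
        set d := v + ((j₂ : ℕ) : Fin n) with hddef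
        have hduv := sub_val_add huv
        have hdlt := (v - u).isLt
        have hj1d : j₁ ≠ (v - u).val := by
          intro h
          apply hv'
          have : c = v := by
            rw [hcdef, h, Fin.cast_val_eq_self, add_comm, sub_add_cancel]
          rwa [this] at hc₁
        have hj2e : j₂ ≠ (u - v).val := by
          intro h
          apply hu'
          have : d = u := by
            rw [hddef, h, Fin.cast_val_eq_self, add_comm, sub_add_cancel]
          rwa [this] at hc₂
        -- c ≠ d
        have hveq : v = u + (((v - u).val : ℕ) : Fin n) := by
          rw [Fin.cast_val_eq_self, add_comm, sub_add_cancel]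
        have hcd : c ≠ d := by
          intro h
          rw [hcdef, hddef, hveq, add_assoc, ← Nat.cast_add] at h
          have h2 := add_left_cancel h
          have := congrArg Fin.val h2
          rw [cast_val_lt (by omega), cast_val_lt (by omega)] at this
          omega
        -- s = {c, d}
        have hsub : ({c, d} : Finset (Fin n)) ⊆ s := by
          intro z hz
          rcases Finset.mem_insert.mp hz with h | h
          · rwa [h]
          · rw [Finset.mem_singleton.mp h]; exact hc₂
        have hseq : s = ({c, d} : Finset (Fin n)) :=
          (Finset.eq_of_subset_of_card_le hsub (by rw [Finset.card_pair hcd]; omega)).symm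
        have hs : ∀ z ∈ s, z = c ∨ z = d := by
          intro z hz
          rw [hseq] at hz
          rcases Finset.mem_insert.mp hz with h | h
          · exact Or.inl h
          · exact Or.inr (Finset.mem_singleton.mp h)
        have huc : u ≠ c := fun h => hu' (h ▸ hc₁)
        have hud : u ≠ d := fun h => hu' (h ▸ hc₂)
        have hvc : v ≠ c := fun h => hv' (h ▸ hc₁)
        have hvd : v ≠ d := fun h => hv' (h ▸ hc₂)
        exact hardCase hn hk s c d u v hcd hs huc hud hvc hvd hu hv
  · -- nonempty
    have : ∃ x : Fin n, x ∉ s := by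
      by_contra hno
      push_neg at hno
      have : s = Finset.univ := Finset.eq_univ_iff_forall.mpr hno
      rw [this, Finset.card_univ, Fintype.card_fin] at hcard
      omega
    obtain ⟨x, hx⟩ := this
    exact ⟨⟨x, hx⟩⟩
end Graph4


section Count
variable {n k : ℕ} [NeZero n] (hn : n = 2 * k + 1) (hk : 2 ≤ k)
include hn hk

lemma cast_inj_lt {a b : ℕ} (ha : a < n) (hb : b < n)
    (h : ((a : ℕ) : Fin n) = ((b : ℕ) : Fin n)) : a = b := by
  have := congrArg Fin.val h
  rwa [cast_val_lt ha, cast_val_lt hb] at this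

lemma base_edgeSet :
    (baseGraph n k).edgeSet =
      ↑((Finset.univ.image fun x : Fin n => s(x, x + 1)) ∪
        ((Finset.range (k + 1)).image fun i : ℕ => s(((i : ℕ) : Fin n), (((i + k : ℕ)) : Fin n)))) := by
  ext e
  refine Sym2.ind (fun x y => ?_) e
  rw [Finset.mem_coe, SimpleGraph.mem_edgeSet, baseGraph, fromRel_adj]
  simp only [Finset.mem_union, Finset.mem_image, Finset.mem_univ, true_and, Finset.mem_range,
    Sym2.eq_iff, baseRel]
  constructor
  · rintro ⟨hne, h | h⟩
    · rcases h with h | ⟨i, hik, hx, hy⟩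
      · exact Or.inl ⟨x, Or.inl ⟨rfl, h.symm⟩⟩
      · exact Or.inr ⟨i, by omega, Or.inl ⟨hx.symm, hy.symm⟩⟩
    · rcases h with h | ⟨i, hik, hy, hx⟩
      · exact Or.inl ⟨y, Or.inr ⟨rfl, h.symm⟩⟩
      · exact Or.inr ⟨i, by omega, Or.inr ⟨hy.symm, hx.symm⟩⟩
  · rintro (⟨a, ⟨hx, hy⟩ | ⟨hy, hx⟩⟩ | ⟨i, hik, ⟨hx, hy⟩ | ⟨hy, hx⟩⟩)
    · subst hx; subst hy
      refine ⟨?_, Or.inl (Or.inl rfl)⟩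
      exact (adj_cycle hn hk a).ne
    · subst hx; subst hy
      refine ⟨?_, Or.inr (Or.inl rfl)⟩
      exact (adj_cycle hn hk a).ne.symm
    · subst hx; subst hy
      refine ⟨?_, Or.inl (Or.inr ⟨i, by omega, rfl, rfl⟩)⟩
      exact (adj_chord hn hk (by omega : i ≤ k)).ne
    · subst hx; subst hy
      refine ⟨?_, Or.inr (Or.inr ⟨i, by omega, rfl, rfl⟩)⟩
      exact (adj_chord hn hk (by omega : i ≤ k)).ne.symm

lemma base_card : (baseGraph n k).edgeSet.ncard = n + (k + 1) := by
  rw [base_edgeSet hn hk, Set.ncard_coe_finset]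
  rw [Finset.card_union_of_disjoint, Finset.card_image_of_injective _ ?inj1,
    Finset.card_image_of_injOn ?inj2, Finset.card_univ, Fintype.card_fin, Finset.card_range]
  case inj1 =>
    intro a b hab
    rw [Sym2.eq_iff] at hab
    rcases hab with ⟨h1, h2⟩ | ⟨h1, h2⟩
    · exact h1
    · exfalso
      subst h1
      rw [add_assoc] at h2
      nth_rewrite 2 [← add_zero b] at h2
      have h3 := add_left_cancel h2
      have := congrArg Fin.val h3
      rw [show ((1 : Fin n) + 1) = (((2:ℕ)) : Fin n) by push_cast; ring] at this
      rw [cast_val_lt (by omega)] at this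
      simp at this
  case inj2 =>
    intro a ha b hb hab
    simp only [Finset.coe_range, Set.mem_Iio] at ha hb
    rw [Sym2.eq_iff] at hab
    rcases hab with ⟨h1, h2⟩ | ⟨h1, h2⟩
    · exact cast_inj_lt hn hk (by omega) (by omega) h1
    · have e1 := cast_inj_lt hn hk (by omega) (by omega) h1
      have e2 := cast_inj_lt hn hk (by omega) (by omega) h2
      omega
  · -- disjointness
    rw [Finset.disjoint_left]
    rintro e he1 he2
    simp only [Finset.mem_image, Finset.mem_univ, true_and, Finset.mem_range] at he1 he2
    obtain ⟨a, ha⟩ := he1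
    obtain ⟨i, hik, hi⟩ := he2
    rw [← ha, Sym2.eq_iff] at hi
    rcases hi with ⟨h1, h2⟩ | ⟨h1, h2⟩
    · -- i = a, i + k = a + 1
      subst h1
      have : (((i + k : ℕ)) : Fin n) = (((i + 1 : ℕ)) : Fin n) := by
        rw [h2]; push_cast; ring
      have := cast_inj_lt hn hk (by omega) (by omega) this
      omega
    · -- i = a + 1, i + k = a
      have h3 : (((i + k + 1 : ℕ)) : Fin n) = ((i : ℕ) : Fin n) := by
        rw [show (((i + k + 1 : ℕ)) : Fin n) = (((i + k : ℕ)) : Fin n) + 1 by push_cast; ring,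
          h2, ← h1]
      rcases Nat.lt_or_ge (i + k + 1) n with hlt | hge
      · have := cast_inj_lt hn hk hlt (by omega) h3
        omega
      · have hieq : i + k + 1 = n := by omega
        rw [hieq, Fin.natCast_self] at h3
        have h5 : (((0:ℕ)) : Fin n) = ((i : ℕ) : Fin n) := by rw [Nat.cast_zero]; exact h3
        have := cast_inj_lt hn hk (by omega) (by omega) h5
        omega
end Count


lemma threeConn_mono {V : Type*} [Fintype V] {G H : SimpleGraph V} (h : G ≤ H)
    (hG : ThreeConnected G) : ThreeConnected H := by
  refine ⟨hG.1, fun s hs => (hG.2 s hs).mono ?_⟩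
  intro a b hab
  exact h hab

theorem stmt7 (n m : ℕ) (hn : Odd n) (h5 : 5 ≤ n)
    (hlo : 3 * n + 1 ≤ 2 * m) (hhi : 2 * m ≤ n * (n - 1)) :
    ∃ G : SimpleGraph (Fin n), ThreeConnected G ∧ G.edgeSet.ncard = m := by
  obtain ⟨k, hk⟩ := hn
  have hk2 : 2 ≤ k := by omega
  haveI : NeZero n := ⟨by omega⟩
  set B := baseGraph n k with hB
  have hBcard : B.edgeSet.ncard = n + (k + 1) := base_card hk hk2
  -- the base edge finset
  set E0 : Finset (Sym2 (Fin n)) :=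
    (Finset.univ.image fun x : Fin n => s(x, x + 1)) ∪
      ((Finset.range (k + 1)).image fun i : ℕ => s(((i : ℕ) : Fin n), (((i + k : ℕ)) : Fin n)))
    with hE0
  have hBE0 : B.edgeSet = ↑E0 := base_edgeSet hk hk2
  have hE0card : E0.card = n + (k + 1) := by
    rw [← Set.ncard_coe_finset, ← hBE0]; exact hBcard
  -- E0 is contained in the edge finset of ⊤
  have hE0top : E0 ⊆ (⊤ : SimpleGraph (Fin n)).edgeFinset := by
    intro e he
    rw [SimpleGraph.mem_edgeFinset]
    have : e ∈ B.edgeSet := by rw [hBE0]; exact he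
    exact SimpleGraph.edgeSet_mono le_top this
  have htopcard : (⊤ : SimpleGraph (Fin n)).edgeFinset.card = n * (n - 1) / 2 := by
    rw [SimpleGraph.card_edgeFinset_top_eq_card_choose_two, Fintype.card_fin, Nat.choose_two_right]
  have hm1 : n + (k + 1) ≤ m := by omega
  have hm2 : m ≤ n * (n - 1) / 2 := by
    rw [Nat.le_div_iff_mul_le two_pos]; omega
  obtain ⟨C, hC1, hC2, hC3⟩ := Finset.exists_subsuperset_card_eq hE0top
    (n := m - (n + (k + 1)) + E0.card) (by omega) (by rw [hE0card, htopcard]; omega)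
  rw [hE0card] at hC3
  have hCcard : C.card = m := by omega
  -- the final graph
  refine ⟨SimpleGraph.fromEdgeSet ↑C, ?_, ?_⟩
  · refine threeConn_mono ?_ ⟨by simp [Fintype.card_fin]; omega, fun s hs => base_conn hk hk2 s hs⟩
    intro a b hab
    rw [SimpleGraph.fromEdgeSet_adj]
    refine ⟨?_, hab.ne⟩
    have : s(a, b) ∈ B.edgeSet := hab
    rw [hBE0] at this
    exact hC1 this
  · have hnodiag : ∀ e ∈ C, ¬ e.IsDiag := by
      intro e he
      have := hC2 he
      rw [SimpleGraph.mem_edgeFinset] at this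
      exact SimpleGraph.not_isDiag_of_mem_edgeSet _ this
    have : (SimpleGraph.fromEdgeSet (↑C : Set (Sym2 (Fin n)))).edgeSet = ↑C := by
      rw [SimpleGraph.edgeSet_fromEdgeSet]
      ext e
      simp only [Set.mem_diff, Finset.mem_coe, Set.mem_setOf_eq]
      exact ⟨fun h => h.1, fun h => ⟨h, hnodiag e h⟩⟩
    rw [this, Set.ncard_coe_finset, hCcard]
end
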